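/- Let G_σ be a connected signed graph without positive cycles and with at least two vertices. Then G_σ is sign connected if and only if the underlying graph G contains a cycle. -/
import Mathlib


namespace SignedGraph

variable {V : Type*}

/-- The sign of a walk in a signed graph: the product of its edge signs. -/
def walkSign {G : SimpleGraph V} (σ : V → V → ℤˣ) : {u v : V} → G.Walk u v → ℤˣ
  | _, _, SimpleGraph.Walk.nil => 1
  | u, _, SimpleGraph.Walk.cons (v := w) _ p => σ u w * walkSign σ p

/-- A signed graph is balanced if every cycle has positive sign. -/
def Balanced (G : SimpleGraph V) (σ : V → V → ℤˣ) : Prop :=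
  ∀ ⦃u : V⦄ (c : G.Walk u u), c.IsCycle → walkSign σ c = 1

/-- Sign connection: every two distinct vertices are joined both by a
positive and by a negative walk. -/
def SignConnected (G : SimpleGraph V) (σ : V → V → ℤˣ) : Prop :=
  ∀ x y : V, x = y ∨
    ((∃ p : G.Walk x y, walkSign σ p = 1) ∧ (∃ p : G.Walk x y, walkSign σ p = -1))

open Classical in
/-- Switching by a vertex subset `W`: negate the signs of edges with exactly
one endpoint in `W`. -/
noncomputable def switchSign (W : Set V) (σ : V → V → ℤˣ) (u v : V) : ℤˣ :=
  if Xor' (u ∈ W) (v ∈ W) then -σ u v else σ u v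

variable {G : SimpleGraph V}

lemma walkSign_append (σ : V → V → ℤˣ) :
    ∀ {u v w : V} (p : G.Walk u v) (q : G.Walk v w),
      walkSign σ (p.append q) = walkSign σ p * walkSign σ q
  | _, _, _, SimpleGraph.Walk.nil, q => by simp [walkSign]
  | _, _, _, SimpleGraph.Walk.cons h p, q => by
      simp [walkSign, walkSign_append σ p q, mul_assoc]

lemma walkSign_reverse (σ : V → V → ℤˣ) (hσ : ∀ u v, σ u v = σ v u) :
    ∀ {u v : V} (p : G.Walk u v), walkSign σ p.reverse = walkSign σ p
  | _, _, SimpleGraph.Walk.nil => rfl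
  | u, v, SimpleGraph.Walk.cons (v := w) h p => by
      rw [SimpleGraph.Walk.reverse_cons, walkSign_append,
        walkSign_reverse σ hσ p]
      simp [walkSign, hσ w u, mul_comm]

lemma walkSign_potential (σ : V → V → ℤˣ) (f : V → ℤˣ)
    (hedge : ∀ a b : V, G.Adj a b → σ a b = f a * f b) :
    ∀ {u w : V} (p : G.Walk u w), walkSign σ p = f u * f w
  | _, _, SimpleGraph.Walk.nil => (Int.units_mul_self _).symm
  | u, w, SimpleGraph.Walk.cons (v := c) h p => by
      rw [walkSign, walkSign_potential σ f hedge p, hedge u c h, mul_assoc,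
        ← mul_assoc (f c), Int.units_mul_self, one_mul]

/-- In a connected acyclic graph, the sign of a walk depends only on its
endpoints. -/
lemma walkSign_const (σ : V → V → ℤˣ) (hσ : ∀ u v, σ u v = σ v u) (hconn : G.Connected)
    (hacyc : G.IsAcyclic) {x y : V} (p q : G.Walk x y) :
    walkSign σ p = walkSign σ q := by
  classical
  obtain ⟨r⟩ : Nonempty V := hconn.nonempty
  -- potential function: sign of the canonical path from the root
  set f : V → ℤˣ := fun a =>
    walkSign σ ((hconn.preconnected r a).some.toPath : G.Walk r a) with hf
  have hpath : ∀ (a : V) (pp : G.Walk r a), pp.IsPath → walkSign σ pp = f a := by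
    intro a pp hpp
    have := hacyc.path_unique ⟨pp, hpp⟩ (hconn.preconnected r a).some.toPath
    rw [hf]
    exact congrArg (walkSign σ) (congrArg Subtype.val this)
  have hedge : ∀ a b : V, G.Adj a b → σ a b = f a * f b := by
    intro a b hab
    set pa : G.Walk r a := ((hconn.preconnected r a).some.toPath : G.Walk r a)
      with hpa
    have hpaP : pa.IsPath := (hconn.preconnected r a).some.toPath.2
    have hfa : walkSign σ pa = f a := hpath a pa hpaP
    by_cases hb : b ∈ pa.support
    · -- b lies on the canonical path to a
      have hspec := pa.take_spec hb
      have htP : (pa.takeUntil b hb).IsPath := hpaP.takeUntil hb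
      have hdP : (pa.dropUntil b hb).IsPath := hpaP.dropUntil hb
      have hd : pa.dropUntil b hb = SimpleGraph.Walk.cons hab.symm SimpleGraph.Walk.nil := by
        have := hacyc.path_unique ⟨pa.dropUntil b hb, hdP⟩
          (SimpleGraph.Path.singleton hab.symm)
        exact congrArg Subtype.val this
      have ht : walkSign σ (pa.takeUntil b hb) = f b :=
        hpath b _ htP
      have h3 : walkSign σ pa = f b * (σ b a * 1) := by
        rw [← hspec, walkSign_append, ht, hd]
        rfl
      rw [hfa, mul_one] at h3
      calc σ a b = σ b a := (hσ b a).symm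
        _ = f b * (f b * σ b a) := by
            rw [← mul_assoc, Int.units_mul_self, one_mul]
        _ = f b * f a := by rw [← h3]
        _ = f a * f b := mul_comm _ _
    · -- extend the canonical path to a by the edge ab
      have hq : ((pa.concat hab) : G.Walk r b).IsPath := by
        rw [← SimpleGraph.Walk.isPath_reverse_iff]
        rw [SimpleGraph.Walk.reverse_concat]
        exact hpaP.reverse.cons (by simpa using hb)
      have := hpath b _ hq
      rw [SimpleGraph.Walk.concat_eq_append, walkSign_append, hfa] at this
      have h1 : walkSign σ (SimpleGraph.Walk.cons hab SimpleGraph.Walk.nil) = σ a b * 1 := rfl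
      rw [h1, mul_one] at this
      calc σ a b = f a * (f a * σ a b) := by
            rw [← mul_assoc, Int.units_mul_self, one_mul]
        _ = f a * f b := by rw [this]
  rw [walkSign_potential σ f hedge p, walkSign_potential σ f hedge q]

end SignedGraph

open SignedGraph

/-- A connected signed graph without positive cycles and with at least two
vertices is sign connected iff its underlying graph contains a cycle. -/
theorem stmt_17 {V : Type*} [Fintype V] [Nontrivial V] (G : SimpleGraph V)
    (σ : V → V → ℤˣ) (hσ : ∀ u v : V, σ u v = σ v u) (hconn : G.Connected)
    (hcontra : ∀ (u : V) (c : G.Walk u u), c.IsCycle → walkSign σ c ≠ 1) :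
    SignConnected G σ ↔ ∃ (u : V) (c : G.Walk u u), c.IsCycle := by
  constructor
  · intro hsc
    by_contra hcyc
    push_neg at hcyc
    have hacyc : G.IsAcyclic := fun v c hc => hcyc v c hc
    obtain ⟨x, y, hxy⟩ := exists_pair_ne V
    rcases hsc x y with h | ⟨⟨p, hp⟩, ⟨q, hq⟩⟩
    · exact hxy h
    · have := walkSign_const σ hσ hconn hacyc p q
      rw [hp, hq] at this
      exact absurd this (by decide)
  · rintro ⟨u, c, hc⟩
    have hcs : walkSign σ c = -1 := by
      rcases Int.units_eq_one_or (walkSign σ c) with h | h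
      · exact absurd h (hcontra u c hc)
      · exact h
    intro x y
    right
    obtain ⟨p⟩ := hconn.preconnected x y
    obtain ⟨q⟩ := hconn.preconnected x u
    -- the detour walk through the cycle has the opposite sign
    set w : G.Walk x y := q.append (c.append (q.reverse.append p)) with hw
    have hws : walkSign σ w = -walkSign σ p := by
      rw [hw, walkSign_append, walkSign_append, walkSign_append,
        walkSign_reverse σ hσ, hcs]
      rw [neg_one_mul, mul_neg, ← mul_assoc, Int.units_mul_self, one_mul]
    rcases Int.units_eq_one_or (walkSign σ p) with h | h
    · exact ⟨⟨p, h⟩, ⟨w, by rw [hws, h]⟩⟩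
    · exact ⟨⟨w, by rw [hws, h]; rfl⟩, ⟨p, h⟩⟩
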